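/- With the softmax CPMF P_α(i|θ,q) = exp(-α(θ - iq)^2) / Σ_{j∈A} exp(-α(θ - jq)^2) on a finite integer set A and soft quantizer Q_d(θ,q) = Σ_{i∈A} P_α(i|θ,q) · iq, the partial derivative of Q_d with respect to q equals (1/q)·(M₁ + 2αθ·(M₂ - M₁²) - 2α·(M₃ - M₁M₂)), where M_k = Σ_{i∈A} (iq)^k P_α(i|θ,q). -/

import Mathlib

open Finset

noncomputable def softPMF (A : Finset ℤ) (q α θ : ℝ) (i : ℤ) : ℝ :=
  Real.exp (-α * (θ - i * q) ^ 2) / ∑ j ∈ A, Real.exp (-α * (θ - j * q) ^ 2)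

noncomputable def softQuant (A : Finset ℤ) (q α θ : ℝ) : ℝ :=
  ∑ i ∈ A, softPMF A q α θ i * (i * q)

/-- `k`-th moment of the reproduction point `iq` under the softmax CPMF. -/
noncomputable def softMoment (A : Finset ℤ) (q α θ : ℝ) (k : ℕ) : ℝ :=
  ∑ i ∈ A, (i * q) ^ k * softPMF A q α θ i

/-- Lemma 1 (part 2): `∂Q_d/∂q = (1/q)·(M₁ + 2αθ·(M₂ - M₁²) - 2α·(M₃ - M₁M₂))`. -/
theorem softQuant_hasDerivAt_q (A : Finset ℤ) (hA : A.Nonempty) (q α θ : ℝ)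
    (hq : 0 < q) (hα : 0 < α) :
    HasDerivAt (fun r => softQuant A r α θ)
      ((1 / q) * (softMoment A q α θ 1
        + 2 * α * θ * (softMoment A q α θ 2 - (softMoment A q α θ 1) ^ 2)
        - 2 * α * (softMoment A q α θ 3
            - softMoment A q α θ 1 * softMoment A q α θ 2))) q := by
  have hq0 : q ≠ 0 := ne_of_gt hq
  set F : ℤ → ℝ → ℝ := fun i r => Real.exp (-α * (θ - i * r) ^ 2) with hFdef
  set S : ℝ → ℝ := fun r => ∑ j ∈ A, F j r with hSdef
  have hSpos : 0 < S q := Finset.sum_pos (fun i _ => Real.exp_pos _) hA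
  have hS0 : S q ≠ 0 := ne_of_gt hSpos
  have hFder : ∀ i : ℤ, HasDerivAt (F i) (2 * α * i * (θ - i * q) * F i q) q := by
    intro i
    have h1 : HasDerivAt (fun r : ℝ => θ - (i : ℝ) * r) (-(i : ℝ)) q := by
      simpa using ((hasDerivAt_id q).const_mul (i : ℝ)).const_sub θ
    have h3 := ((h1.fun_pow 2).const_mul (-α)).exp
    convert h3 using 1
    simp only [hFdef]
    ring_nf
  set N' : ℝ := ∑ i ∈ A, ((i : ℝ) * F i q + (i : ℝ) * q * (2 * α * i * (θ - i * q) * F i q))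
    with hN'def
  have hNder : HasDerivAt (fun r => ∑ i ∈ A, (i : ℝ) * r * F i r) N' q := by
    apply HasDerivAt.fun_sum
    intro i _
    have hmul : HasDerivAt (fun r : ℝ => (i : ℝ) * r) (i : ℝ) q := by
      simpa using (hasDerivAt_id q).const_mul (i : ℝ)
    simpa using hmul.fun_mul (hFder i)
  set S' : ℝ := ∑ i ∈ A, 2 * α * i * (θ - i * q) * F i q with hS'def
  have hSder : HasDerivAt S S' q := HasDerivAt.fun_sum fun i _ => hFder i
  have hdiv := hNder.fun_div hSder hS0
  have hfun : (fun r => softQuant A r α θ) = fun r => (∑ i ∈ A, (i : ℝ) * r * F i r) / S r := by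
    funext r
    simp only [softQuant, softPMF, hSdef, hFdef, Finset.sum_div]
    exact Finset.sum_congr rfl fun i _ => by ring
  rw [hfun]
  refine hdiv.congr_deriv ?_
  set T1 : ℝ := ∑ i ∈ A, ((i : ℝ) * q) ^ 1 * F i q with hT1
  set T2 : ℝ := ∑ i ∈ A, ((i : ℝ) * q) ^ 2 * F i q with hT2
  set T3 : ℝ := ∑ i ∈ A, ((i : ℝ) * q) ^ 3 * F i q with hT3
  have hM : ∀ k : ℕ, softMoment A q α θ k = (∑ i ∈ A, ((i : ℝ) * q) ^ k * F i q) / S q := by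
    intro k
    simp only [softMoment, softPMF, hSdef, hFdef, Finset.sum_div]
    exact Finset.sum_congr rfl fun i _ => (mul_div_assoc _ _ _).symm
  have hM1 : softMoment A q α θ 1 = T1 / S q := hM 1
  have hM2 : softMoment A q α θ 2 = T2 / S q := hM 2
  have hM3 : softMoment A q α θ 3 = T3 / S q := hM 3
  have hNq : (∑ i ∈ A, (i : ℝ) * q * F i q) = T1 := by
    rw [hT1]; exact Finset.sum_congr rfl fun i _ => by ring
  have hqN : q * N' = T1 + 2 * α * θ * T2 - 2 * α * T3 := by
    rw [hN'def, hT1, hT2, hT3]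
    simp only [Finset.mul_sum]
    rw [← Finset.sum_add_distrib, ← Finset.sum_sub_distrib]
    exact Finset.sum_congr rfl fun i _ => by ring
  have hqS : q * S' = 2 * α * (θ * T1 - T2) := by
    rw [hS'def, hT1, hT2]
    simp only [Finset.mul_sum]
    rw [← Finset.sum_sub_distrib, Finset.mul_sum]
    exact Finset.sum_congr rfl fun i _ => by ring
  have hN' : N' = (T1 + 2 * α * θ * T2 - 2 * α * T3) / q := by
    rw [eq_div_iff hq0]; linarith [hqN]
  have hS' : S' = 2 * α * (θ * T1 - T2) / q := by
    rw [eq_div_iff hq0]; linarith [hqS]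
  rw [hM1, hM2, hM3, hN', hS', hNq]
  field_simp
  ring
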